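/- arXiv:2109.05251 — 3 statements merged into one kernel-verified Lean document; each statement's English description precedes it below -/
import Mathlib

section
/- Local minimizer characterization for ℓ0-regularized convex problems: let f : ℝⁿ → ℝ be convex and continuous, Ω ⊆ ℝⁿ a box [l,u] with l < 0 < u possible, λ₁ > 0, and F₀(x) = f(x) + λ₁‖x‖₀. If x̄ ∈ Ω is a global minimizer of f over Ω̄ = {x ∈ Ω : x_j = 0 for all j with x̄_j = 0}, then x̄ is a local minimizer of F₀ over Ω. -/
theorem stmt14 {n : ℕ} (f : (Fin n → ℝ) → ℝ) (hconv : ConvexOn ℝ Set.univ f)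
    (hcont : Continuous f) (l u : Fin n → ℝ) (lam₁ : ℝ) (hlam₁ : 0 < lam₁)
    (xb : Fin n → ℝ) (hxb : xb ∈ Set.Icc l u)
    (hmin : ∀ x ∈ {x ∈ Set.Icc l u | ∀ j, xb j = 0 → x j = 0}, f xb ≤ f x) :
    ∃ δ > 0, ∀ x ∈ Set.Icc l u, ‖x - xb‖ < δ →
      f xb + lam₁ * ((Finset.univ.filter (fun j => xb j ≠ 0)).card : ℝ) ≤
        f x + lam₁ * ((Finset.univ.filter (fun j => x j ≠ 0)).card : ℝ) := by
  classical
  -- δ₁ : continuity radius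
  obtain ⟨δ₁, hδ₁pos, hδ₁⟩ := Metric.continuous_iff.mp hcont xb lam₁ hlam₁
  -- δ₂ : keeps nonzero coordinates nonzero
  obtain ⟨δ₂, hδ₂pos, hδ₂⟩ : ∃ δ₂ > 0, ∀ j : Fin n, xb j ≠ 0 → δ₂ ≤ |xb j| := by
    by_cases h : (Finset.univ.filter (fun j => xb j ≠ 0)).Nonempty
    · refine ⟨(Finset.univ.filter (fun j => xb j ≠ 0)).inf' h (fun j => |xb j|), ?_, ?_⟩
      · rw [gt_iff_lt, Finset.lt_inf'_iff]
        intro j hj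
        simp only [Finset.mem_filter] at hj
        exact abs_pos.mpr hj.2
      · intro j hj
        exact Finset.inf'_le _ (by simp [hj])
    · exact ⟨1, one_pos, fun j hj => absurd ⟨j, by simp [hj]⟩ h⟩
  refine ⟨min δ₁ δ₂, lt_min hδ₁pos hδ₂pos, ?_⟩
  intro x hx hxd
  have hcoord : ∀ j, |x j - xb j| ≤ ‖x - xb‖ := fun j => by
    simpa using norm_le_pi_norm (x - xb) j
  -- support of xb ⊆ support of x
  have hsub : (Finset.univ.filter (fun j => xb j ≠ 0)) ⊆
      (Finset.univ.filter (fun j => x j ≠ 0)) := by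
    intro j hj
    simp only [Finset.mem_filter, Finset.mem_univ, true_and] at hj ⊢
    intro hxj
    have h1 := hδ₂ j hj
    have h2 := hcoord j
    rw [hxj] at h2
    simp only [zero_sub, abs_neg] at h2
    linarith [lt_of_lt_of_le hxd (min_le_right δ₁ δ₂)]
  by_cases hcase : ∀ j, xb j = 0 → x j = 0
  · -- x in restricted set, supports equal
    have hle := hmin x ⟨hx, hcase⟩
    have hcard : (Finset.univ.filter (fun j => x j ≠ 0)) ⊆
        (Finset.univ.filter (fun j => xb j ≠ 0)) := by
      intro j hj
      simp only [Finset.mem_filter, Finset.mem_univ, true_and] at hj ⊢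
      intro h; exact hj (hcase j h)
    have : (Finset.univ.filter (fun j => xb j ≠ 0)).card =
        (Finset.univ.filter (fun j => x j ≠ 0)).card :=
      le_antisymm (Finset.card_le_card hsub) (Finset.card_le_card hcard)
    rw [this]
    linarith
  · -- strict superset: card increases by at least 1
    push_neg at hcase
    obtain ⟨j, hj0, hjne⟩ := hcase
    have hstrict : (Finset.univ.filter (fun j => xb j ≠ 0)) ⊂
        (Finset.univ.filter (fun j => x j ≠ 0)) := by
      refine ⟨hsub, fun h => ?_⟩
      have := h (by simp [hjne] : j ∈ Finset.univ.filter (fun j => x j ≠ 0))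
      simp [hj0] at this
    have hcard : (Finset.univ.filter (fun j => xb j ≠ 0)).card + 1 ≤
        (Finset.univ.filter (fun j => x j ≠ 0)).card := Finset.card_lt_card hstrict
    have hf : f xb ≤ f x + lam₁ := by
      have := hδ₁ x (by
        rw [dist_eq_norm]
        exact lt_of_lt_of_le hxd (min_le_left δ₁ δ₂))
      rw [Real.dist_eq] at this
      have := abs_lt.mp this
      linarith
    have hc : ((Finset.univ.filter (fun j => xb j ≠ 0)).card : ℝ) + 1 ≤
        ((Finset.univ.filter (fun j => x j ≠ 0)).card : ℝ) := by
      exact_mod_cast hcard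
    nlinarith
end

section
/- Conversely: if x̄ is a local minimizer of F₀(x) = f(x) + λ₁‖x‖₀ over a box Ω (f convex continuous, λ₁ > 0), then x̄ is a global minimizer of f over Ω̄ = {x ∈ Ω : x_j = 0 for all j ∈ A(x̄)}, where A(x̄) = {j : x̄_j = 0}. -/
theorem stmt15 {n : ℕ} (f : (Fin n → ℝ) → ℝ) (hconv : ConvexOn ℝ Set.univ f)
    (hcont : Continuous f) (l u : Fin n → ℝ) (lam₁ : ℝ) (hlam₁ : 0 < lam₁)
    (xb : Fin n → ℝ) (hxb : xb ∈ Set.Icc l u)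
    (hloc : ∃ δ > 0, ∀ x ∈ Set.Icc l u, ‖x - xb‖ < δ →
      f xb + lam₁ * ((Finset.univ.filter (fun j => xb j ≠ 0)).card : ℝ) ≤
        f x + lam₁ * ((Finset.univ.filter (fun j => x j ≠ 0)).card : ℝ)) :
    ∀ x ∈ {x ∈ Set.Icc l u | ∀ j, xb j = 0 → x j = 0}, f xb ≤ f x := by
  rintro x ⟨hx, hsupp⟩
  obtain ⟨δ, hδ, hloc⟩ := hloc
  set t : ℝ := min 1 (δ / (‖x - xb‖ + 1)) with ht
  have hnorm : (0:ℝ) ≤ ‖x - xb‖ := norm_nonneg _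
  have ht0 : 0 < t := lt_min one_pos (div_pos hδ (by linarith))
  have ht1 : t ≤ 1 := min_le_left _ _
  set y : Fin n → ℝ := (1 - t) • xb + t • x with hy
  have hyj : ∀ j, y j = (1 - t) * xb j + t * x j := by
    intro j; simp [hy]
  have hyIcc : y ∈ Set.Icc l u := by
    constructor <;> intro j <;> rw [hyj j] <;>
    · have h1 := hxb.1 j; have h2 := hxb.2 j
      have h3 := hx.1 j; have h4 := hx.2 j
      nlinarith
  have hysupp : (Finset.univ.filter (fun j => y j ≠ 0)).card ≤
      (Finset.univ.filter (fun j => xb j ≠ 0)).card := by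
    apply Finset.card_le_card
    intro j hj
    simp only [Finset.mem_filter, Finset.mem_univ, true_and] at hj ⊢
    intro h
    apply hj
    rw [hyj j, h, hsupp j h]
    ring
  have hynear : ‖y - xb‖ < δ := by
    have hyx : y - xb = t • (x - xb) := by
      funext j; simp [hyj j]; ring
    rw [hyx, norm_smul, Real.norm_eq_abs, abs_of_pos ht0]
    calc t * ‖x - xb‖ ≤ (δ / (‖x - xb‖ + 1)) * ‖x - xb‖ := by
          exact mul_le_mul_of_nonneg_right (min_le_right _ _) hnorm
      _ < δ := by
          rw [div_mul_eq_mul_div, div_lt_iff₀ (by linarith)]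
          nlinarith
  have key := hloc y hyIcc hynear
  have hfy : f xb ≤ f y := by
    have hcard : lam₁ * ((Finset.univ.filter fun j => y j ≠ 0).card : ℝ) ≤
        lam₁ * ((Finset.univ.filter fun j => xb j ≠ 0).card : ℝ) := by
      apply mul_le_mul_of_nonneg_left _ hlam₁.le
      exact_mod_cast hysupp
    linarith
  have hconvy : f y ≤ (1 - t) * f xb + t * f x :=
    hconv.2 (Set.mem_univ xb) (Set.mem_univ x) (by linarith) ht0.le (by ring)
  nlinarith
end

section
/- Descent with extrapolation: let f_s be convex differentiable with L_s-Lipschitz gradient, h convex, Ω nonempty closed convex, β ∈ [0,1). Given x^{k-1}, x^k ∈ Ω, set y^k = x^k + β_k(x^k − x^{k-1}) with β_k ∈ [0,β], and x^{k+1} = argmin_{x∈Ω}{ h(x) + ⟨∇f_s(y^k), x − y^k⟩ + (L_s/2)‖x − y^k‖² }. Then (h+f_s)(x^{k+1}) + (L_s/2)‖x^{k+1} − x^k‖² ≤ (h+f_s)(x^k) + (L_s β²/2)‖x^k − x^{k-1}‖². -/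
/-!
The descent lemma bounds `fs (x^{k+1})` by the quadratic model of `fs` at `y^k`, and the gradient
inequality bounds the linearisation of `fs` at `y^k` by `fs (x^k)`. The model
`h + ⟪∇fs (y^k), · - y^k⟫ + (Ls/2)‖· - y^k‖²` is `Ls`-strongly convex, so its minimiser `x^{k+1}`
over `Ω` beats `x^k` by `(Ls/2)‖x^k - x^{k+1}‖²` (three-point inequality). Adding the three and
using `‖x^k - y^k‖ = βk ‖x^k - x^{k-1}‖ ≤ β ‖x^k - x^{k-1}‖` gives the claim.
-/

open RealInnerProductSpace Set Filter Topology

variable {E : Type*} [NormedAddCommGroup E] [InnerProductSpace ℝ E]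

section Gradient

variable [CompleteSpace E] {f : E → ℝ}

theorem HasGradientAt.hasDerivAt_comp_add_smul {f' x v : E} {t : ℝ}
    (hf : HasGradientAt f f' (x + t • v)) :
    HasDerivAt (fun s : ℝ => f (x + s • v)) ⟪f', v⟫ t := by
  have hline : HasDerivAt (fun s : ℝ => x + s • v) v t := by
    simpa using ((hasDerivAt_id t).smul_const v).const_add x
  have := hf.hasFDerivAt.comp_hasDerivAt t hline
  simp only [InnerProductSpace.toDual_apply_apply] at this
  exact this

theorem ConvexOn.add_inner_le_of_hasGradientAt {f' : E} (hf : ConvexOn ℝ univ f)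
    {x : E} (hgrad : HasGradientAt f f' x) (v : E) :
    f x + ⟪f', v⟫ ≤ f (x + v) := by
  have hline : ConvexOn ℝ univ (fun s : ℝ => f (x + s • v)) := by
    have hcomp : (fun s : ℝ => f (x + s • v)) = f ∘ AffineMap.lineMap x (x + v) := by
      ext s; simp [AffineMap.lineMap_apply, add_comm]
    exact hcomp ▸ hf.comp_affineMap _
  have := hline.le_slope_of_hasDerivAt (mem_univ 0) (mem_univ 1) zero_lt_one
    (HasGradientAt.hasDerivAt_comp_add_smul (t := 0) (by simpa using hgrad))
  simp only [slope_def_field, one_smul, zero_smul, add_zero, sub_zero, div_one] at this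
  linarith

theorem le_add_inner_add_sq_of_lipschitz_gradient {g : E → E} {L : ℝ}
    (hgrad : ∀ x, HasGradientAt f (g x) x) (hLip : ∀ x y, ‖g x - g y‖ ≤ L * ‖x - y‖)
    (x v : E) :
    f (x + v) ≤ f x + ⟪g x, v⟫ + L / 2 * ‖v‖ ^ 2 := by
  let ψ : ℝ → ℝ := fun t => f (x + t • v) - t * ⟪g x, v⟫ - L / 2 * t ^ 2 * ‖v‖ ^ 2
  have hψ : ∀ t : ℝ, HasDerivAt ψ (⟪g (x + t • v) - g x, v⟫ - L * t * ‖v‖ ^ 2) t := by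
    intro t
    refine ((((hgrad (x + t • v)).hasDerivAt_comp_add_smul).sub
      ((hasDerivAt_id t).mul_const ⟪g x, v⟫)).sub
      (((hasDerivAt_pow 2 t).const_mul (L / 2)).mul_const (‖v‖ ^ 2))).congr_deriv ?_
    simp only [inner_sub_left, Nat.cast_ofNat]
    ring
  have hψ_anti : AntitoneOn ψ (Ici 0) := by
    refine antitoneOn_of_hasDerivWithinAt_nonpos (convex_Ici 0)
      (fun t _ => (hψ t).continuousAt.continuousWithinAt)
      (fun t _ => (hψ t).hasDerivWithinAt) fun t ht => ?_
    rw [interior_Ici, mem_Ioi] at ht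
    have : ⟪g (x + t • v) - g x, v⟫ ≤ L * t * ‖v‖ ^ 2 :=
      calc ⟪g (x + t • v) - g x, v⟫ ≤ ‖g (x + t • v) - g x‖ * ‖v‖ := real_inner_le_norm _ _
        _ ≤ L * ‖(x + t • v) - x‖ * ‖v‖ := by gcongr; exact hLip _ _
        _ = L * t * ‖v‖ ^ 2 := by
          rw [add_sub_cancel_left, norm_smul, Real.norm_of_nonneg ht.le]; ring
    linarith
  have := hψ_anti self_mem_Ici (mem_Ici.2 zero_le_one) zero_le_one
  simp only [ψ, zero_smul, add_zero, one_smul, zero_mul, sub_zero, one_mul, one_pow,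
    ne_eq, OfNat.ofNat_ne_zero, not_false_eq_true, zero_pow, mul_zero] at this
  linarith

end Gradient

section ProximalStep

variable {φ : E → ℝ} {Ω : Set E} {L : ℝ} {w p q : E}

theorem ConvexOn.sub_le_inner_of_isMinOn_add_sq (hφ : ConvexOn ℝ Ω φ) (hp : p ∈ Ω) (hq : q ∈ Ω)
    (hmin : IsMinOn (fun x => φ x + L / 2 * ‖x - w‖ ^ 2) Ω p) :
    φ p - φ q ≤ L * ⟪p - w, q - p⟫ := by
  have hstep : ∀ t ∈ Ioc (0 : ℝ) 1,
      φ p - φ q - L * ⟪p - w, q - p⟫ ≤ t * (L / 2 * ‖q - p‖ ^ 2) := by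
    rintro t ⟨ht₀, ht₁⟩
    have hz : p + t • (q - p) = (1 - t) • p + t • q := by module
    have hzΩ : p + t • (q - p) ∈ Ω := hz ▸ hφ.1 hp hq (by linarith) ht₀.le (by ring)
    have hφz : φ (p + t • (q - p)) ≤ (1 - t) * φ p + t * φ q :=
      hz ▸ hφ.2 hp hq (by linarith) ht₀.le (by ring)
    have hnorm : ‖p + t • (q - p) - w‖ ^ 2 =
        ‖p - w‖ ^ 2 + 2 * t * ⟪p - w, q - p⟫ + t ^ 2 * ‖q - p‖ ^ 2 := by
      rw [add_sub_right_comm, norm_add_sq_real, real_inner_smul_right, norm_smul,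
        Real.norm_of_nonneg ht₀.le]
      ring
    have hle := isMinOn_iff.1 hmin _ hzΩ
    simp only [hnorm] at hle
    refine le_of_mul_le_mul_left ?_ ht₀
    nlinarith
  have hlim : Tendsto (fun t : ℝ => t * (L / 2 * ‖q - p‖ ^ 2)) (𝓝[>] 0) (𝓝 0) := by
    simpa using ((continuous_mul_const _).tendsto' 0 _ (zero_mul _)).mono_left
      nhdsWithin_le_nhds
  have := ge_of_tendsto hlim (eventually_of_mem (Ioc_mem_nhdsGT zero_lt_one) hstep)
  linarith

theorem ConvexOn.add_sq_le_of_isMinOn_add_sq (hφ : ConvexOn ℝ Ω φ) (hp : p ∈ Ω) (hq : q ∈ Ω)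
    (hmin : IsMinOn (fun x => φ x + L / 2 * ‖x - w‖ ^ 2) Ω p) :
    φ p + L / 2 * ‖p - w‖ ^ 2 + L / 2 * ‖q - p‖ ^ 2 ≤ φ q + L / 2 * ‖q - w‖ ^ 2 := by
  have hvar := hφ.sub_le_inner_of_isMinOn_add_sq hp hq hmin
  have hsplit : ‖q - w‖ ^ 2 = ‖p - w‖ ^ 2 + 2 * ⟪p - w, q - p⟫ + ‖q - p‖ ^ 2 := by
    rw [← norm_add_sq_real, sub_add_sub_cancel']
  rw [hsplit]
  linarith

end ProximalStep

theorem stmt18_general {n : ℕ} (fs h : EuclideanSpace ℝ (Fin n) → ℝ)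
    (g : EuclideanSpace ℝ (Fin n) → EuclideanSpace ℝ (Fin n))
    (Ls β βk : ℝ) (hLs : 0 < Ls)
    (hβk : βk ∈ Set.Icc 0 β)
    (hfs : ConvexOn ℝ Set.univ fs)
    (hgrad : ∀ x, HasGradientAt fs (g x) x)
    (hLip : ∀ x y, ‖g x - g y‖ ≤ Ls * ‖x - y‖)
    (hh : ConvexOn ℝ Set.univ h)
    (Ω : Set (EuclideanSpace ℝ (Fin n)))
    (hconv : Convex ℝ Ω)
    (xkm1 xk xkp1 yk : EuclideanSpace ℝ (Fin n))
    (hxk : xk ∈ Ω) (hxkp1 : xkp1 ∈ Ω)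
    (hyk : yk = xk + βk • (xk - xkm1))
    (hmin : ∀ x ∈ Ω,
      h xkp1 + ⟪g yk, xkp1 - yk⟫ + Ls / 2 * ‖xkp1 - yk‖ ^ 2 ≤
        h x + ⟪g yk, x - yk⟫ + Ls / 2 * ‖x - yk‖ ^ 2) :
    h xkp1 + fs xkp1 + Ls / 2 * ‖xkp1 - xk‖ ^ 2 ≤
      h xk + fs xk + Ls * β ^ 2 / 2 * ‖xk - xkm1‖ ^ 2 := by
  have hdescent := le_add_inner_add_sq_of_lipschitz_gradient hgrad hLip yk (xkp1 - yk)
  have hsupport := hfs.add_inner_le_of_hasGradientAt (hgrad yk) (xk - yk)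
  rw [add_sub_cancel] at hdescent hsupport
  have hmodel : ConvexOn ℝ Ω fun x => h x + ⟪g yk, x - yk⟫ :=
    ((hh.subset (subset_univ Ω) hconv).add
      (((innerSL ℝ (g yk)).toLinearMap.convexOn hconv).add_const (-⟪g yk, yk⟫))).congr
      fun x _ => by simp [inner_sub_right, ← sub_eq_add_neg]
  have hprox := hmodel.add_sq_le_of_isMinOn_add_sq hxkp1 hxk (isMinOn_iff.2 hmin)
  have hextra : ‖xk - yk‖ ^ 2 ≤ β ^ 2 * ‖xk - xkm1‖ ^ 2 := by
    rw [hyk, sub_add_cancel_left, norm_neg, norm_smul, Real.norm_of_nonneg hβk.1, mul_pow]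
    gcongr
    exacts [hβk.1, hβk.2]
  have hscaled : Ls / 2 * ‖xk - yk‖ ^ 2 ≤ Ls * β ^ 2 / 2 * ‖xk - xkm1‖ ^ 2 := by
    rw [mul_div_right_comm, mul_assoc]
    gcongr
  rw [norm_sub_rev xk xkp1] at hprox
  linarith

theorem stmt18 {n : ℕ} (fs h : EuclideanSpace ℝ (Fin n) → ℝ)
    (g : EuclideanSpace ℝ (Fin n) → EuclideanSpace ℝ (Fin n))
    (Ls β βk : ℝ) (hLs : 0 < Ls) (hβ : β ∈ Set.Ico (0 : ℝ) 1)
    (hβk : βk ∈ Set.Icc 0 β)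
    (hfs : ConvexOn ℝ Set.univ fs)
    (hgrad : ∀ x, HasGradientAt fs (g x) x)
    (hLip : ∀ x y, ‖g x - g y‖ ≤ Ls * ‖x - y‖)
    (hh : ConvexOn ℝ Set.univ h)
    (Ω : Set (EuclideanSpace ℝ (Fin n))) (hne : Ω.Nonempty) (hcl : IsClosed Ω)
    (hconv : Convex ℝ Ω)
    (xkm1 xk xkp1 yk : EuclideanSpace ℝ (Fin n))
    (hxkm1 : xkm1 ∈ Ω) (hxk : xk ∈ Ω) (hxkp1 : xkp1 ∈ Ω)
    (hyk : yk = xk + βk • (xk - xkm1))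
    (hmin : ∀ x ∈ Ω,
      h xkp1 + ⟪g yk, xkp1 - yk⟫ + Ls / 2 * ‖xkp1 - yk‖ ^ 2 ≤
        h x + ⟪g yk, x - yk⟫ + Ls / 2 * ‖x - yk‖ ^ 2) :
    h xkp1 + fs xkp1 + Ls / 2 * ‖xkp1 - xk‖ ^ 2 ≤
      h xk + fs xk + Ls * β ^ 2 / 2 * ‖xk - xkm1‖ ^ 2 :=
  stmt18_general fs h g Ls β βk hLs hβk hfs hgrad hLip hh Ω hconv xkm1 xk xkp1 yk hxk hxkp1 hyk hmin
end
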